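/- Let Z be the set-function K ↦ Z(K) associated to a binomial system p_1,…,p_n with p_n = x_n^ℓ − c_n x_{n−1}^m (ℓ, m > 0), and let Z̃ be the analogous function for the parametrically reduced system p̃_1,…,p̃_{n−1} in variables u_1,…,u_{n−1} obtained via x_i ↦ u_i (i ≤ n−2), x_{n−1} ↦ u_{n−1}^{ℓ'}, x_n ↦ u_{n−1}^{m'}. Then: (a) if there exists K ⊆ [n] with |Z(K)| > |K|, there exists K̃ ⊆ [n−1] with |Z̃(K̃)| > |K̃|; and (b) conversely, if there exists K̃ ⊆ [n−1] with |Z̃(K̃)| > |K̃|, there exists K ⊆ [n] with |Z(K)| > |K|. -/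

import Mathlib

/-!
Reduction collapses the last two variables, i.e. it is the degeneracy map
`σ = (last n).predAbove : Fin (n + 2) → Fin (n + 1)`. As `ℓ', m' > 0`, the support of every
reduced exponent vector is the `σ`-image of the original support, so `Z̃(K̃)` consists of the
first `n + 1` indices of `Z(σ⁻¹ K̃)`. The last binomial involves only the two collapsed
variables, one in each monomial, so it lies in `Z(K)` exactly when both of them lie in `K`,
and then `|σ K| < |K|`. Hence `K ↦ σ K` does not decrease `|Z(K)| - |K|`, and `K̃ ↦ σ⁻¹ K̃` preserves it.
-/

open Function Set

theorem Fin.ncard_eq_ncard_preimage_castSucc_add {k : ℕ} (S : Set (Fin (k + 1)))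
    [Decidable (last k ∈ S)] :
    S.ncard = (castSucc ⁻¹' S).ncard + if last k ∈ S then 1 else 0 := by
  have himage : castSucc '' (castSucc ⁻¹' S) = S \ {last k} := by
    ext i
    simp only [image_preimage_eq_inter_range, range_castSucc, mem_inter_iff, mem_ofPred_eq,
      mem_sdiff, mem_singleton_iff, ← Fin.val_ne_iff, val_last]
    exact and_congr_right fun _ => by omega
  rw [← ncard_image_of_injective _ (castSucc_injective k), himage]
  split_ifs with h
  · exact (ncard_sdiff_singleton_add_one h).symm
  · rw [sdiff_singleton_eq_self h, add_zero]

theorem Fin.val_predAbove_last {n : ℕ} (i : Fin (n + 2)) :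
    ((last n).predAbove i : ℕ) = min (i : ℕ) n := by
  rw [predAbove_last_apply]
  split_ifs with h
  · simp [h]
  · simp only [coe_castPred]
    have := Fin.val_lt_last h
    omega

theorem Fin.support_eq_image_predAbove_last {n ℓ' m' : ℕ} (hℓ' : 0 < ℓ') (hm' : 0 < m')
    {γ : Fin (n + 2) → ℕ} {γt : Fin (n + 1) → ℕ}
    (hγ : ∀ l : Fin (n + 1), γt l = if h : (l : ℕ) < n then γ ⟨l, by omega⟩
        else ℓ' * γ ⟨n, by omega⟩ + m' * γ ⟨n + 1, by omega⟩) :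
    support γt = (last n).predAbove '' support γ := by
  ext l
  simp only [mem_support, mem_image, hγ, Fin.ext_iff, val_predAbove_last]
  split_ifs with hl
  · constructor
    · exact fun h => ⟨_, h, by simp only; omega⟩
    · rintro ⟨x, hx, hxl⟩
      rwa [show (⟨l, by omega⟩ : Fin (n + 2)) = x from Fin.ext (by simp only; omega)]
  · have hfiber : ∀ x : Fin (n + 2),
        min (x : ℕ) n = l ↔ x = ⟨n, by omega⟩ ∨ x = ⟨n + 1, by omega⟩ := by
      intro x
      simp only [Fin.ext_iff]
      omega
    simp only [hfiber, and_or_left, exists_or, exists_eq_right]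
    simp only [ne_eq, Nat.add_eq_zero_iff, mul_eq_zero, hℓ'.ne', hm'.ne', false_or, not_and_or]

theorem Set.ncard_image_add_one_le_of_eq {α β : Type*} {f : α → β} {s : Set α} {a b : α}
    (hs : s.Finite) (ha : a ∈ s) (hb : b ∈ s) (hab : a ≠ b) (hf : f a = f b) :
    (f '' s).ncard + 1 ≤ s.ncard := by
  have hne : (f '' s).ncard ≠ s.ncard := fun h => hab (injOn_of_ncard_image_eq h hs ha hb hf)
  have := ncard_image_le (f := f) hs
  omega

section ZSet

variable {ι κ : Type*} {α β : ι → κ → ℕ}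

/-- `Z(K)`: the binomials `x^(α j) - c_j x^(β j)` both of whose monomials involve a variable
of `K`. -/
def zSet (α β : ι → κ → ℕ) (K : Set κ) : Set ι :=
  {j | (∃ l ∈ K, α j l ≠ 0) ∧ ∃ l ∈ K, β j l ≠ 0}

theorem zSet_mono {K K' : Set κ} (h : K ⊆ K') : zSet α β K ⊆ zSet α β K' :=
  fun _ ⟨⟨l, hl, ha⟩, ⟨l', hl', hb⟩⟩ => ⟨⟨l, h hl, ha⟩, ⟨l', h hl', hb⟩⟩

theorem mem_zSet_iff_of_support_eq_singleton {j : ι} {a b : κ} (hα : support (α j) = {a})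
    (hβ : support (β j) = {b}) (K : Set κ) : j ∈ zSet α β K ↔ a ∈ K ∧ b ∈ K := by
  simp only [zSet, mem_ofPred_eq, ← mem_support, hα, hβ, mem_singleton_iff, exists_eq_right]

theorem zSet_eq_preimage {ι' κ' : Type*} {αt βt : ι' → κ' → ℕ} {f : κ → κ'} {g : ι' → ι}
    (hα : ∀ j, support (αt j) = f '' support (α (g j)))
    (hβ : ∀ j, support (βt j) = f '' support (β (g j))) (Kt : Set κ') :
    zSet αt βt Kt = g ⁻¹' zSet α β (f ⁻¹' Kt) := by
  have hmeet : ∀ S : Set κ, (∃ l ∈ Kt, l ∈ f '' S) ↔ ∃ l ∈ f ⁻¹' Kt, l ∈ S := fun S =>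
    ⟨fun ⟨_, hl, x, hx, hfx⟩ => ⟨x, show f x ∈ Kt from hfx ▸ hl, hx⟩,
      fun ⟨x, hx, hxS⟩ => ⟨f x, hx, x, hxS, rfl⟩⟩
  ext j
  simp only [zSet, mem_preimage, mem_ofPred_eq, ← mem_support, hα, hβ, hmeet]

end ZSet

section Reduction

open Fin

variable {n : ℕ} {α β : Fin (n + 2) → Fin (n + 2) → ℕ} {αt βt : Fin (n + 1) → Fin (n + 1) → ℕ}
  (hlast : ∀ K, last (n + 1) ∈ zSet α β K ↔ last (n + 1) ∈ K ∧ (last n).castSucc ∈ K)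
  (hred : ∀ Kt, zSet αt βt Kt = castSucc ⁻¹' zSet α β ((last n).predAbove ⁻¹' Kt))
include hlast hred

theorem exists_ncard_lt_zSet_reduced {K : Set (Fin (n + 2))}
    (hK : K.ncard < (zSet α β K).ncard) :
    ∃ Kt : Set (Fin (n + 1)), Kt.ncard < (zSet αt βt Kt).ncard := by
  classical
  refine ⟨(last n).predAbove '' K, ?_⟩
  have hZ := ncard_eq_ncard_preimage_castSucc_add (zSet α β K)
  have hZt : (castSucc ⁻¹' zSet α β K).ncard ≤ (zSet αt βt ((last n).predAbove '' K)).ncard := by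
    rw [hred]
    exact ncard_le_ncard (preimage_mono (zSet_mono (subset_preimage_image _ _)))
  have hKt : ((last n).predAbove '' K).ncard + (if last (n + 1) ∈ zSet α β K then 1 else 0)
      ≤ K.ncard := by
    split_ifs with h
    · rw [hlast] at h
      exact ncard_image_add_one_le_of_eq (toFinite K) h.2 h.1 (castSucc_lt_last _).ne
        (by rw [predAbove_last_castSucc, predAbove_right_last])
    · simpa using ncard_image_le (toFinite K)
  omega

theorem exists_ncard_lt_zSet_of_reduced {Kt : Set (Fin (n + 1))}
    (hKt : Kt.ncard < (zSet αt βt Kt).ncard) :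
    ∃ K : Set (Fin (n + 2)), K.ncard < (zSet α β K).ncard := by
  classical
  refine ⟨(last n).predAbove ⁻¹' Kt, ?_⟩
  have hsection : castSucc ⁻¹' ((last n).predAbove ⁻¹' Kt) = Kt := by
    ext
    simp
  have hmem : last (n + 1) ∈ (last n).predAbove ⁻¹' Kt ↔ last n ∈ Kt := by simp
  have hmemZ : last (n + 1) ∈ zSet α β ((last n).predAbove ⁻¹' Kt) ↔ last n ∈ Kt := by
    rw [hlast, mem_preimage, mem_preimage, predAbove_last_castSucc, predAbove_right_last, and_self]
  have hK := ncard_eq_ncard_preimage_castSucc_add ((last n).predAbove ⁻¹' Kt)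
  have hZ := ncard_eq_ncard_preimage_castSucc_add (zSet α β ((last n).predAbove ⁻¹' Kt))
  simp only [hmem, hmemZ, hsection, ← hred] at hK hZ
  omega

end Reduction

/-- Behaviour of the Fischer–Shapiro sets `Z(K)` under parametric reduction: with
`p_{n+2} = x_{n+2}^ℓ - c x_{n+1}^m` and the reduced system obtained via
`x_i ↦ u_i` (`i ≤ n`), `x_{n+1} ↦ u_{n+1}^{ℓ'}`, `x_{n+2} ↦ u_{n+1}^{m'}`:
(a) if some `K` satisfies `|Z(K)| > |K|` then some `K̃` satisfies `|Z̃(K̃)| > |K̃|`, and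
(b) conversely.  (Indices are `0`-based: the system has `n+2` binomials and variables,
the reduced one `n+1`.) -/
theorem stmt6 (n : ℕ) (ℓ m : ℕ) (hℓ : 0 < ℓ) (hm : 0 < m)
    (q ℓ' m' : ℕ) (hq : q = Nat.gcd ℓ m) (hℓ' : ℓ' = ℓ / q) (hm' : m' = m / q)
    (α β : Fin (n + 2) → Fin (n + 2) → ℕ)
    (hαlast : α (Fin.last (n + 1)) =
      fun l : Fin (n + 2) => if (l : ℕ) = n + 1 then ℓ else 0)
    (hβlast : β (Fin.last (n + 1)) =
      fun l : Fin (n + 2) => if (l : ℕ) = n then m else 0)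
    (αt βt : Fin (n + 1) → Fin (n + 1) → ℕ)
    (hαt : ∀ (j : Fin (n + 1)) (l : Fin (n + 1)),
      αt j l = if h : (l : ℕ) < n then α j.castSucc ⟨l, by omega⟩
        else ℓ' * α j.castSucc ⟨n, by omega⟩ + m' * α j.castSucc ⟨n + 1, by omega⟩)
    (hβt : ∀ (j : Fin (n + 1)) (l : Fin (n + 1)),
      βt j l = if h : (l : ℕ) < n then β j.castSucc ⟨l, by omega⟩
        else ℓ' * β j.castSucc ⟨n, by omega⟩ + m' * β j.castSucc ⟨n + 1, by omega⟩) :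
    ((∃ K : Set (Fin (n + 2)),
        K.ncard < {j | (∃ l ∈ K, α j l ≠ 0) ∧ ∃ l ∈ K, β j l ≠ 0}.ncard) →
      ∃ Kt : Set (Fin (n + 1)),
        Kt.ncard < {j | (∃ l ∈ Kt, αt j l ≠ 0) ∧ ∃ l ∈ Kt, βt j l ≠ 0}.ncard) ∧
    ((∃ Kt : Set (Fin (n + 1)),
        Kt.ncard < {j | (∃ l ∈ Kt, αt j l ≠ 0) ∧ ∃ l ∈ Kt, βt j l ≠ 0}.ncard) →
      ∃ K : Set (Fin (n + 2)),
        K.ncard < {j | (∃ l ∈ K, α j l ≠ 0) ∧ ∃ l ∈ K, β j l ≠ 0}.ncard) := by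
  have hℓ'0 : 0 < ℓ' := hℓ' ▸ hq ▸ Nat.div_gcd_pos_of_pos_left m hℓ
  have hm'0 : 0 < m' := hm' ▸ hq ▸ Nat.div_gcd_pos_of_pos_right ℓ hm
  have hlast : ∀ K, Fin.last (n + 1) ∈ zSet α β K ↔
      Fin.last (n + 1) ∈ K ∧ (Fin.last n).castSucc ∈ K :=
    mem_zSet_iff_of_support_eq_singleton (by ext l; simp [hαlast, Fin.ext_iff, hℓ.ne'])
      (by ext l; simp [hβlast, Fin.ext_iff, hm.ne'])
  have hred : ∀ Kt, zSet αt βt Kt =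
      Fin.castSucc ⁻¹' zSet α β ((Fin.last n).predAbove ⁻¹' Kt) :=
    zSet_eq_preimage (fun j => Fin.support_eq_image_predAbove_last hℓ'0 hm'0 (hαt j))
      (fun j => Fin.support_eq_image_predAbove_last hℓ'0 hm'0 (hβt j))
  exact ⟨fun ⟨_, hK⟩ => exists_ncard_lt_zSet_reduced hlast hred hK,
    fun ⟨_, hKt⟩ => exists_ncard_lt_zSet_of_reduced hlast hred hKt⟩
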